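/- arXiv:cond-mat/0703315 — 2 statements merged into one kernel-verified Lean document; each statement's English description precedes it below -/
import Mathlib

section
/- Let d ≥ 1 and α ≥ 0, and set c = Σ_{x ∈ ℤ^d, x ≠ 0} exp(−α|x|²) (possibly infinite). For every finite subset Λ of ℤ^d containing the origin and every integer k ≥ 1, one has P_Λ(ℓ₀ = k) ≤ c^{k−1}. -/
open scoped BigOperators ENNReal

/-- Squared Euclidean distance between two points of `ℤ^d`. -/
noncomputable def distSq {d : ℕ} (x y : Fin d → ℤ) : ℝ :=
  ∑ i, ((x i - y i : ℤ) : ℝ) ^ 2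

/-- Gaussian weight of a permutation of a finite box `Λ ⊂ ℤ^d`. -/
noncomputable def permWeight {d : ℕ} (α : ℝ) (Λ : Finset (Fin d → ℤ))
    (π : Equiv.Perm {x : Fin d → ℤ // x ∈ Λ}) : ℝ :=
  ∏ x : {x : Fin d → ℤ // x ∈ Λ}, Real.exp (-α * distSq x.1 (π x).1)

/-- Partition function `Z(Λ)`. -/
noncomputable def partitionZ {d : ℕ} (α : ℝ) (Λ : Finset (Fin d → ℤ)) : ℝ :=
  ∑ π : Equiv.Perm {x : Fin d → ℤ // x ∈ Λ}, permWeight α Λ π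

/-- Length of the cycle of `π` containing the origin (`1` if `0 ∉ Λ`). -/
noncomputable def cycleLen {d : ℕ} (Λ : Finset (Fin d → ℤ))
    (π : Equiv.Perm {x : Fin d → ℤ // x ∈ Λ}) : ℕ :=
  Function.minimalPeriod (⇑(Equiv.Perm.ofSubtype π)) (0 : Fin d → ℤ)

/-- Gibbs probability that the cycle through the origin has length `k`. -/
noncomputable def cycleProb {d : ℕ} (α : ℝ) (Λ : Finset (Fin d → ℤ)) (k : ℕ) : ℝ :=
  (∑ π : Equiv.Perm {x : Fin d → ℤ // x ∈ Λ},
    if cycleLen Λ π = k then permWeight α Λ π else 0) / partitionZ α Λ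

/-- The centered cube `{-L, …, L}^d` in `ℤ^d`; it contains the origin. -/
noncomputable def centeredCube (d : ℕ) (L : ℕ) : Finset (Fin d → ℤ) :=
  Fintype.piFinset fun _ : Fin d => Finset.Icc (-(L : ℤ)) (L : ℤ)

/-! ### Auxiliary lemmas -/

lemma distSq_nonneg {d : ℕ} (x y : Fin d → ℤ) : 0 ≤ distSq x y :=
  Finset.sum_nonneg fun _ _ => sq_nonneg _

lemma distSq_self {d : ℕ} (x : Fin d → ℤ) : distSq x x = 0 := by
  simp [distSq]

lemma distSq_sub {d : ℕ} (x y : Fin d → ℤ) : distSq x y = distSq (y - x) 0 := by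
  unfold distSq
  refine Finset.sum_congr rfl fun i _ => ?_
  simp only [Pi.sub_apply, Pi.zero_apply]
  push_cast
  ring

lemma permWeight_pos {d : ℕ} (α : ℝ) (Λ : Finset (Fin d → ℤ))
    (π : Equiv.Perm {x : Fin d → ℤ // x ∈ Λ}) : 0 < permWeight α Λ π :=
  Finset.prod_pos fun _ _ => Real.exp_pos _

lemma partitionZ_pos {d : ℕ} (α : ℝ) (Λ : Finset (Fin d → ℤ)) : 0 < partitionZ α Λ :=
  Finset.sum_pos (fun π _ => permWeight_pos α Λ π) ⟨1, Finset.mem_univ 1⟩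

lemma tsum_pi_pow {β : Type*} (f : β → ℝ≥0∞) : ∀ m : ℕ,
    (∑' g : Fin m → β, ∏ j, f (g j)) = (∑' b, f b) ^ m
  | 0 => by
    rw [tsum_eq_single (fun i => i.elim0)
      (by intro b hb; exact absurd (funext fun i => i.elim0) hb)]
    simp
  | m + 1 => by
    rw [← (Fin.consEquiv (fun _ : Fin (m+1) => β)).tsum_eq]
    rw [ENNReal.tsum_prod']
    have h1 : ∀ (a : β) (g : Fin m → β),
        (∏ j, f ((Fin.consEquiv fun _ : Fin (m+1) => β) (a, g) j)) = f a * ∏ j, f (g j) := by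
      intro a g
      rw [Fin.prod_univ_succ]
      simp [Fin.consEquiv]
    simp only [h1]
    rw [pow_succ, mul_comm ((∑' b, f b) ^ m)]
    calc (∑' (a : β), ∑' (g : Fin m → β), f a * ∏ j, f (g j))
        = ∑' (a : β), f a * ∑' (g : Fin m → β), ∏ j, f (g j) := by
          congr 1; funext a; rw [ENNReal.tsum_mul_left]
      _ = (∑' b, f b) * (∑' b, f b) ^ m := by
          rw [tsum_pi_pow f m, ENNReal.tsum_mul_right]

lemma sameCycle_iff_exists_lt {X : Type*} [Fintype X] (o : X) (π : Equiv.Perm X) {k : ℕ}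
    (hk : 0 < k) (hmin : Function.minimalPeriod (⇑π) o = k) (a : X) :
    π.SameCycle o a ↔ ∃ j < k, (π ^ j) o = a := by
  constructor
  · intro h
    obtain ⟨i, _, hi⟩ := h.exists_pow_eq'
    refine ⟨i % k, Nat.mod_lt _ hk, ?_⟩
    have h2 : (π ^ (i % k)) o = (π ^ i) o := by
      have := Function.iterate_mod_minimalPeriod_eq (f := ⇑π) (x := o) (n := i)
      rwa [hmin, Equiv.Perm.iterate_eq_pow, Equiv.Perm.iterate_eq_pow] at this
    exact h2.trans hi
  · rintro ⟨j, _, rfl⟩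
    exact Equiv.Perm.SameCycle.pow_right (Equiv.Perm.SameCycle.refl π o)

lemma mul_cycleOf_inv_apply_of_not {X : Type*} (o : X) (π : Equiv.Perm X)
    [DecidableRel π.SameCycle] {a : X}
    (h : ¬ π.SameCycle o a) : (π * (π.cycleOf o)⁻¹) a = π a := by
  have h1 : (π.cycleOf o)⁻¹ a = a := by
    rw [Equiv.Perm.inv_eq_iff_eq, Equiv.Perm.cycleOf_apply, if_neg h]
  rw [Equiv.Perm.mul_apply, h1]

lemma mul_cycleOf_inv_apply_of {X : Type*} (o : X) (π : Equiv.Perm X)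
    [DecidableRel π.SameCycle] {a : X}
    (h : π.SameCycle o a) : (π * (π.cycleOf o)⁻¹) a = a := by
  have h1 : (π.cycleOf o)⁻¹ a = π⁻¹ a := by
    rw [Equiv.Perm.inv_eq_iff_eq, Equiv.Perm.cycleOf_apply,
      if_pos (Equiv.Perm.sameCycle_apply_right.mp (by simpa using h)), ← Equiv.Perm.mul_apply,
      mul_inv_cancel, Equiv.Perm.one_apply]
  rw [Equiv.Perm.mul_apply, h1, ← Equiv.Perm.mul_apply, mul_inv_cancel, Equiv.Perm.one_apply]

lemma perm_eq_of_cycle_data {X : Type*} [Fintype X] (o : X) (π₁ π₂ : Equiv.Perm X)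
    [DecidableRel π₁.SameCycle] [DecidableRel π₂.SameCycle] {k : ℕ} (hk : 0 < k)
    (h₁ : Function.minimalPeriod (⇑π₁) o = k) (h₂ : Function.minimalPeriod (⇑π₂) o = k)
    (hx : ∀ j < k, (π₁ ^ j) o = (π₂ ^ j) o)
    (hσ : π₁ * (π₁.cycleOf o)⁻¹ = π₂ * (π₂.cycleOf o)⁻¹) : π₁ = π₂ := by
  have hxk1 : (π₁ ^ k) o = o := by
    have := Function.iterate_minimalPeriod (f := ⇑π₁) (x := o)
    rwa [h₁, Equiv.Perm.iterate_eq_pow] at this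
  have hxk2 : (π₂ ^ k) o = o := by
    have := Function.iterate_minimalPeriod (f := ⇑π₂) (x := o)
    rwa [h₂, Equiv.Perm.iterate_eq_pow] at this
  ext a
  by_cases h : ∃ j < k, (π₁ ^ j) o = a
  · obtain ⟨j, hj, rfl⟩ := h
    have e1 : π₁ ((π₁ ^ j) o) = (π₁ ^ (j + 1)) o := by
      rw [pow_succ', Equiv.Perm.mul_apply]
    have e2 : π₂ ((π₂ ^ j) o) = (π₂ ^ (j + 1)) o := by
      rw [pow_succ', Equiv.Perm.mul_apply]
    rcases Nat.lt_or_ge (j + 1) k with hj1 | hj1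
    · calc π₁ ((π₁ ^ j) o) = (π₁ ^ (j + 1)) o := e1
        _ = (π₂ ^ (j + 1)) o := hx _ hj1
        _ = π₂ ((π₂ ^ j) o) := e2.symm
        _ = π₂ ((π₁ ^ j) o) := by rw [hx j hj]
    · have hjk : j + 1 = k := le_antisymm (Nat.succ_le_of_lt hj) hj1
      calc π₁ ((π₁ ^ j) o) = (π₁ ^ (j + 1)) o := e1
        _ = o := by rw [hjk]; exact hxk1
        _ = (π₂ ^ (j + 1)) o := by rw [hjk]; exact hxk2.symm
        _ = π₂ ((π₂ ^ j) o) := e2.symm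
        _ = π₂ ((π₁ ^ j) o) := by rw [hx j hj]
  · push_neg at h
    have h1 : ¬ π₁.SameCycle o a := by
      rw [sameCycle_iff_exists_lt o π₁ hk h₁]
      push_neg
      exact h
    have h2 : ¬ π₂.SameCycle o a := by
      rw [sameCycle_iff_exists_lt o π₂ hk h₂]
      push_neg
      intro j hj
      rw [← hx j hj]
      exact h j hj
    calc π₁ a = (π₁ * (π₁.cycleOf o)⁻¹) a := (mul_cycleOf_inv_apply_of_not o π₁ h1).symm
      _ = (π₂ * (π₂.cycleOf o)⁻¹) a := by rw [hσ]
      _ = π₂ a := mul_cycleOf_inv_apply_of_not o π₂ h2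

lemma weight_bound {d : ℕ} {α : ℝ} (hα : 0 ≤ α) (Λ : Finset (Fin d → ℤ))
    (h0 : (0 : Fin d → ℤ) ∈ Λ) (m : ℕ) (π : Equiv.Perm {x : Fin d → ℤ // x ∈ Λ})
    (hmin : Function.minimalPeriod (⇑π) (⟨0, h0⟩ : {x : Fin d → ℤ // x ∈ Λ}) = m + 1) :
    permWeight α Λ π ≤ permWeight α Λ (π * (π.cycleOf ⟨0, h0⟩)⁻¹) *
      ∏ j : Fin m, Real.exp (-α * distSq
        (((π ^ (j.1 + 1)) ⟨0, h0⟩).1 - ((π ^ j.1) ⟨0, h0⟩).1) 0) := by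
  set o : {x : Fin d → ℤ // x ∈ Λ} := ⟨0, h0⟩ with ho
  let e : {x : Fin d → ℤ // x ∈ Λ} → {x : Fin d → ℤ // x ∈ Λ} → ℝ :=
    fun a b => Real.exp (-α * distSq a.1 b.1)
  have hepos : ∀ a b, 0 ≤ e a b := fun a b => (Real.exp_pos _).le
  have hele : ∀ a b, e a b ≤ 1 := by
    intro a b
    rw [show e a b = Real.exp (-α * distSq a.1 b.1) from rfl, Real.exp_le_one_iff]
    nlinarith [distSq_nonneg a.1 b.1]
  have hinj : ∀ i < m + 1, ∀ j < m + 1, (π ^ i) o = (π ^ j) o → i = j := by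
    intro i hi j hj hij
    refine Function.iterate_injOn_Iio_minimalPeriod (f := ⇑π) (x := o)
      (Set.mem_Iio.mpr (by rw [hmin]; exact hi)) (Set.mem_Iio.mpr (by rw [hmin]; exact hj)) ?_
    simpa [Equiv.Perm.iterate_eq_pow] using hij
  set C : Finset {x : Fin d → ℤ // x ∈ Λ} :=
    Finset.image (fun j : Fin (m + 1) => (π ^ j.1) o) Finset.univ with hC
  have hmemC : ∀ a, a ∈ C ↔ ∃ j < m + 1, (π ^ j) o = a := by
    intro a
    simp only [hC, Finset.mem_image, Finset.mem_univ, true_and]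
    constructor
    · rintro ⟨j, rfl⟩; exact ⟨j.1, j.2, rfl⟩
    · rintro ⟨j, hj, rfl⟩; exact ⟨⟨j, hj⟩, rfl⟩
  have hSC : ∀ a, π.SameCycle o a ↔ a ∈ C := fun a =>
    (sameCycle_iff_exists_lt o π (Nat.succ_pos m) hmin a).trans (hmemC a).symm
  set σ := π * (π.cycleOf o)⁻¹ with hσdef
  have hw : permWeight α Λ π = (∏ a ∈ C, e a (π a)) * ∏ a ∈ Cᶜ, e a (π a) := by
    unfold permWeight
    rw [← Finset.prod_mul_prod_compl C]
  have hwσ : permWeight α Λ σ = ∏ a ∈ Cᶜ, e a (π a) := by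
    have hwσ1 : permWeight α Λ σ = (∏ a ∈ C, e a (σ a)) * ∏ a ∈ Cᶜ, e a (σ a) := by
      unfold permWeight
      rw [← Finset.prod_mul_prod_compl C]
    rw [hwσ1]
    have h1 : ∀ a ∈ C, e a (σ a) = 1 := by
      intro a ha
      show Real.exp (-α * distSq a.1 ((σ a)).1) = 1
      rw [hσdef, mul_cycleOf_inv_apply_of o π ((hSC a).mpr ha)]
      simp [distSq_self]
    have h2 : ∀ a ∈ Cᶜ, e a (σ a) = e a (π a) := by
      intro a ha
      show Real.exp (-α * distSq a.1 ((σ a)).1) = e a (π a)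
      rw [hσdef, mul_cycleOf_inv_apply_of_not o π
        (fun hsc => (Finset.mem_compl.mp ha) ((hSC a).mp hsc))]
    rw [Finset.prod_congr rfl h1, Finset.prod_congr rfl h2, Finset.prod_const_one, one_mul]
  have hCprod : (∏ a ∈ C, e a (π a)) =
      ∏ j : Fin (m + 1), e ((π ^ j.1) o) ((π ^ (j.1 + 1)) o) := by
    rw [hC, Finset.prod_image (fun i _ j _ hij => Fin.ext (hinj i.1 i.2 j.1 j.2 hij))]
    refine Finset.prod_congr rfl fun j _ => ?_
    congr 1
    rw [pow_succ', Equiv.Perm.mul_apply]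
  have hsplit : (∏ j : Fin (m + 1), e ((π ^ j.1) o) ((π ^ (j.1 + 1)) o)) ≤
      ∏ j : Fin m, e ((π ^ j.1) o) ((π ^ (j.1 + 1)) o) := by
    rw [Fin.prod_univ_castSucc]
    simp only [Fin.coe_castSucc]
    exact mul_le_of_le_one_right (Finset.prod_nonneg fun j _ => hepos _ _) (hele _ _)
  calc permWeight α Λ π = (∏ a ∈ C, e a (π a)) * ∏ a ∈ Cᶜ, e a (π a) := hw
    _ ≤ (∏ j : Fin m, e ((π ^ j.1) o) ((π ^ (j.1 + 1)) o)) * ∏ a ∈ Cᶜ, e a (π a) := by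
        refine mul_le_mul_of_nonneg_right ?_ (Finset.prod_nonneg fun a _ => hepos _ _)
        rw [hCprod]; exact hsplit
    _ = permWeight α Λ σ * ∏ j : Fin m, Real.exp (-α * distSq
          (((π ^ (j.1 + 1)) o).1 - ((π ^ j.1) o).1) 0) := by
        rw [hwσ, mul_comm]
        congr 1
        refine Finset.prod_congr rfl fun j _ => ?_
        show Real.exp (-α * distSq ((π ^ j.1) o).1 ((π ^ (j.1+1)) o).1) = _
        rw [distSq_sub]

lemma diff_ne_zero {d : ℕ} (Λ : Finset (Fin d → ℤ)) (h0 : (0 : Fin d → ℤ) ∈ Λ) (m : ℕ)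
    (π : Equiv.Perm {x : Fin d → ℤ // x ∈ Λ})
    (hmin : Function.minimalPeriod (⇑π) (⟨0, h0⟩ : {x : Fin d → ℤ // x ∈ Λ}) = m + 1)
    (j : Fin m) :
    ((π ^ (j.1 + 1)) ⟨0, h0⟩).1 - ((π ^ j.1) ⟨0, h0⟩).1 ≠ 0 := by
  intro hzero
  have h1 : (j.1 + 1) = j.1 := by
    refine Function.iterate_injOn_Iio_minimalPeriod (f := ⇑π) (x := (⟨0, h0⟩ : {x // x ∈ Λ}))
      (Set.mem_Iio.mpr (by rw [hmin]; exact Nat.succ_lt_succ j.2))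
      (Set.mem_Iio.mpr (by rw [hmin]; exact Nat.lt_succ_of_lt j.2)) ?_
    show (⇑π)^[j.1 + 1] (⟨0, h0⟩ : {x // x ∈ Λ}) = (⇑π)^[j.1] ⟨0, h0⟩
    rw [Equiv.Perm.iterate_eq_pow, Equiv.Perm.iterate_eq_pow]
    exact Subtype.ext (sub_eq_zero.mp hzero)
  exact Nat.succ_ne_self j.1 h1

/-- The data map used for the injection: the increment tuple and the cycle-erased permutation. -/
noncomputable def permToData {d : ℕ} (Λ : Finset (Fin d → ℤ)) (h0 : (0 : Fin d → ℤ) ∈ Λ) (m : ℕ)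
    (π : Equiv.Perm {x : Fin d → ℤ // x ∈ Λ})
    (hmin : Function.minimalPeriod (⇑π) (⟨0, h0⟩ : {x : Fin d → ℤ // x ∈ Λ}) = m + 1) :
    (Fin m → {v : Fin d → ℤ // v ≠ 0}) × Equiv.Perm {x : Fin d → ℤ // x ∈ Λ} :=
  (fun j => ⟨((π ^ (j.1 + 1)) ⟨0, h0⟩).1 - ((π ^ j.1) ⟨0, h0⟩).1, diff_ne_zero Λ h0 m π hmin j⟩,
    π * (π.cycleOf ⟨0, h0⟩)⁻¹)

lemma permToData_injective {d : ℕ} (Λ : Finset (Fin d → ℤ)) (h0 : (0 : Fin d → ℤ) ∈ Λ) (m : ℕ)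
    (π₁ π₂ : Equiv.Perm {x : Fin d → ℤ // x ∈ Λ})
    (h₁ : Function.minimalPeriod (⇑π₁) (⟨0, h0⟩ : {x : Fin d → ℤ // x ∈ Λ}) = m + 1)
    (h₂ : Function.minimalPeriod (⇑π₂) (⟨0, h0⟩ : {x : Fin d → ℤ // x ∈ Λ}) = m + 1)
    (hEq : permToData Λ h0 m π₁ h₁ = permToData Λ h0 m π₂ h₂) : π₁ = π₂ := by
  set o : {x : Fin d → ℤ // x ∈ Λ} := ⟨0, h0⟩ with ho
  have hfst := congrArg Prod.fst hEq
  have hsnd := congrArg Prod.snd hEq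
  simp only [permToData] at hfst hsnd
  have hx : ∀ j < m + 1, (π₁ ^ j) o = (π₂ ^ j) o := by
    intro j hj
    induction j with
    | zero => rfl
    | succ n ih =>
      have hn := ih (Nat.lt_of_succ_lt hj)
      have hy := congrFun hfst ⟨n, Nat.lt_of_succ_lt_succ hj⟩
      have hy' := congrArg Subtype.val hy
      simp only at hy'
      have hnval : ((π₁ ^ n) o).1 = ((π₂ ^ n) o).1 := congrArg Subtype.val hn
      apply Subtype.ext
      calc ((π₁ ^ (n + 1)) o).1
          = (((π₁ ^ (n + 1)) o).1 - ((π₁ ^ n) o).1) + ((π₁ ^ n) o).1 := (sub_add_cancel _ _).symm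
        _ = (((π₂ ^ (n + 1)) o).1 - ((π₂ ^ n) o).1) + ((π₂ ^ n) o).1 := by rw [hy', hnval]
        _ = ((π₂ ^ (n + 1)) o).1 := sub_add_cancel _ _
  exact perm_eq_of_cycle_data o π₁ π₂ (Nat.succ_pos m) h₁ h₂ hx hsnd

/-- For `d ≥ 1`, `α ≥ 0`, `c = Σ_{x ≠ 0} exp(-α|x|²)` (possibly infinite),
any finite `Λ ∋ 0` and any `k ≥ 1`, one has `P_Λ(ℓ₀ = k) ≤ c^(k-1)`. -/
theorem cycleProb_le_pow {d : ℕ} (hd : 1 ≤ d) {α : ℝ} (hα : 0 ≤ α)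
    (c : ℝ≥0∞)
    (hc : c = ∑' x : {x : Fin d → ℤ // x ≠ 0}, ENNReal.ofReal (Real.exp (-α * distSq x.1 0)))
    (Λ : Finset (Fin d → ℤ)) (h0 : (0 : Fin d → ℤ) ∈ Λ) (k : ℕ) (hk : 1 ≤ k) :
    ENNReal.ofReal (cycleProb α Λ k) ≤ c ^ (k - 1) := by
  classical
  obtain ⟨m, rfl⟩ : ∃ m, k = m + 1 := ⟨k - 1, (Nat.succ_pred_eq_of_pos hk).symm⟩
  simp only [Nat.add_sub_cancel]
  set o : {x : Fin d → ℤ // x ∈ Λ} := ⟨0, h0⟩ with ho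
  -- transfer of `cycleLen`
  have hlen : ∀ π : Equiv.Perm {x : Fin d → ℤ // x ∈ Λ},
      cycleLen Λ π = Function.minimalPeriod (⇑π) o := by
    intro π
    have hiter : ∀ n : ℕ, (⇑(Equiv.Perm.ofSubtype π))^[n] (0 : Fin d → ℤ) = ((π ^ n) o).1 := by
      intro n
      rw [Equiv.Perm.iterate_eq_pow, ← map_pow]
      exact Equiv.Perm.ofSubtype_apply_of_mem (π ^ n) h0
    have hper : ∀ n : ℕ, Function.IsPeriodicPt (⇑(Equiv.Perm.ofSubtype π)) n (0 : Fin d → ℤ) ↔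
        Function.IsPeriodicPt (⇑π) n o := by
      intro n
      unfold Function.IsPeriodicPt Function.IsFixedPt
      rw [hiter n, Equiv.Perm.iterate_eq_pow]
      constructor
      · intro h; exact Subtype.ext h
      · intro h; rw [h]
    have hNpos : 0 < orderOf π := orderOf_pos π
    have hP2 : Function.IsPeriodicPt (⇑π) (orderOf π) o := by
      show (⇑π)^[orderOf π] o = o
      rw [Equiv.Perm.iterate_eq_pow, pow_orderOf_eq_one]
      rfl
    have hP1 := (hper _).mpr hP2
    unfold cycleLen
    apply le_antisymm
    · exact Function.IsPeriodicPt.minimalPeriod_le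
        (Function.IsPeriodicPt.minimalPeriod_pos hNpos hP2)
        ((hper _).mpr (Function.isPeriodicPt_minimalPeriod _ _))
    · exact Function.IsPeriodicPt.minimalPeriod_le
        (Function.IsPeriodicPt.minimalPeriod_pos hNpos hP1)
        ((hper _).mp (Function.isPeriodicPt_minimalPeriod _ _))
  have hZpos : 0 < partitionZ α Λ := partitionZ_pos α Λ
  rw [cycleProb, ENNReal.ofReal_div_of_pos hZpos,
    ENNReal.div_le_iff (ENNReal.ofReal_pos.mpr hZpos).ne' ENNReal.ofReal_ne_top]
  set T : Finset (Equiv.Perm {x : Fin d → ℤ // x ∈ Λ}) :=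
    Finset.univ.filter (fun π => cycleLen Λ π = m + 1) with hT
  have hnum : (∑ π : Equiv.Perm {x : Fin d → ℤ // x ∈ Λ},
      if cycleLen Λ π = m + 1 then permWeight α Λ π else 0) = ∑ π ∈ T, permWeight α Λ π :=
    (Finset.sum_filter _ _).symm
  rw [hnum, ENNReal.ofReal_sum_of_nonneg (fun π _ => (permWeight_pos α Λ π).le)]
  have hmem : ∀ π ∈ T, Function.minimalPeriod (⇑π) o = m + 1 := by
    intro π hπ
    have := (Finset.mem_filter.mp hπ).2
    rwa [hlen] at this
  -- the injection
  set G : (Fin m → {v : Fin d → ℤ // v ≠ 0}) × Equiv.Perm {x : Fin d → ℤ // x ∈ Λ} → ℝ≥0∞ :=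
    fun p => (∏ j, ENNReal.ofReal (Real.exp (-α * distSq (p.1 j).1 0))) *
      ENNReal.ofReal (permWeight α Λ p.2) with hG
  have key : (∑ π ∈ T, ENNReal.ofReal (permWeight α Λ π)) ≤ ∑' p, G p := by
    calc (∑ π ∈ T, ENNReal.ofReal (permWeight α Λ π))
        = ∑' π : {π // π ∈ T}, ENNReal.ofReal (permWeight α Λ π.1) :=
          (Finset.tsum_subtype T fun π => ENNReal.ofReal (permWeight α Λ π)).symm
      _ ≤ ∑' π : {π // π ∈ T}, G (permToData Λ h0 m π.1 (hmem π.1 π.2)) := by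
          refine ENNReal.tsum_le_tsum fun π => ?_
          have hb := weight_bound hα Λ h0 m π.1 (hmem π.1 π.2)
          rw [hG]
          simp only [permToData]
          calc ENNReal.ofReal (permWeight α Λ π.1)
              ≤ ENNReal.ofReal (permWeight α Λ (π.1 * (π.1.cycleOf o)⁻¹) *
                ∏ j : Fin m, Real.exp (-α * distSq
                  (((π.1 ^ (j.1 + 1)) o).1 - ((π.1 ^ j.1) o).1) 0)) :=
                ENNReal.ofReal_le_ofReal hb
            _ = (∏ j : Fin m, ENNReal.ofReal (Real.exp (-α * distSq
                  (((π.1 ^ (j.1 + 1)) o).1 - ((π.1 ^ j.1) o).1) 0))) *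
                ENNReal.ofReal (permWeight α Λ (π.1 * (π.1.cycleOf o)⁻¹)) := by
                rw [ENNReal.ofReal_mul (permWeight_pos α Λ _).le, mul_comm,
                  ENNReal.ofReal_prod_of_nonneg (fun j _ => (Real.exp_pos _).le)]
      _ ≤ ∑' p, G p := by
          apply ENNReal.tsum_comp_le_tsum_of_injective
          intro π₁ π₂ h
          exact Subtype.ext (permToData_injective Λ h0 m π₁.1 π₂.1
            (hmem π₁.1 π₁.2) (hmem π₂.1 π₂.2) h)
  refine key.trans ?_
  have hsum : (∑' p, G p) = c ^ m * ENNReal.ofReal (partitionZ α Λ) := by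
    rw [hG, ENNReal.tsum_prod']
    calc (∑' y : Fin m → {v : Fin d → ℤ // v ≠ 0},
          ∑' σ : Equiv.Perm {x : Fin d → ℤ // x ∈ Λ},
            (∏ j, ENNReal.ofReal (Real.exp (-α * distSq (y j).1 0))) *
              ENNReal.ofReal (permWeight α Λ σ))
        = (∑' y : Fin m → {v : Fin d → ℤ // v ≠ 0},
            (∏ j, ENNReal.ofReal (Real.exp (-α * distSq (y j).1 0)))) *
          ∑' σ : Equiv.Perm {x : Fin d → ℤ // x ∈ Λ}, ENNReal.ofReal (permWeight α Λ σ) := by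
          rw [← ENNReal.tsum_mul_right]
          congr 1
          funext y
          rw [ENNReal.tsum_mul_left]
      _ = c ^ m * ENNReal.ofReal (partitionZ α Λ) := by
          congr 1
          · rw [hc]
            exact tsum_pi_pow
              (fun v : {v : Fin d → ℤ // v ≠ 0} => ENNReal.ofReal (Real.exp (-α * distSq v.1 0))) m
          · rw [tsum_fintype, partitionZ,
              ENNReal.ofReal_sum_of_nonneg (fun π _ => (permWeight_pos α Λ π).le)]
  rw [hsum]
end

section
/- (General-weight version of the exponential bound.) Let d ≥ 1, α > 0, and let ξ : ℤ^d × ℤ^d → [0, ∞] be a nonnegative symmetric function that is translation invariant (ξ(x,y) depends only on x − y) with ξ(x,x) = 0. Set c = Σ_{x ∈ ℤ^d, x ≠ 0} exp(−α ξ(0,x)). For a finite set Λ ⊂ ℤ^d containing the origin, define the Gibbs measure on bijections π : Λ → Λ with weights w(π) = Π_{x∈Λ} exp(−α ξ(x, π(x))), normalized by Z(Λ) = Σ_π w(π). Then for every k ≥ 1, P_Λ(ℓ₀ = k) ≤ c^{k−1}; in particular, if c < 1 then, along any sequence of cubes Λ_m ↗ ℤ^d for which the limits p_k = lim_m P_{Λ_m}(ℓ₀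 = k) exist for all k, one has Σ_{k≥1} p_k = 1 (no infinite cycles). -/
open scoped BigOperators ENNReal

/-- `exp(-α t)` for `t ∈ [0, ∞]`, with the convention `exp(-∞) = 0`. -/
noncomputable def expNeg (α : ℝ) (t : ℝ≥0∞) : ℝ :=
  if t = ∞ then 0 else Real.exp (-α * t.toReal)

/-- Weight `Π_{x ∈ Λ} exp(-α ξ(x, π(x)))` of a permutation of the finite box `Λ ⊂ ℤ^d`. -/
noncomputable def xiWeight {d : ℕ} (α : ℝ) (ξ : (Fin d → ℤ) → (Fin d → ℤ) → ℝ≥0∞)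
    (Λ : Finset (Fin d → ℤ)) (π : Equiv.Perm {x : Fin d → ℤ // x ∈ Λ}) : ℝ :=
  ∏ x : {x : Fin d → ℤ // x ∈ Λ}, expNeg α (ξ x.1 (π x).1)

/-- Partition function `Z(Λ)` with general weights `ξ`. -/
noncomputable def xiZ {d : ℕ} (α : ℝ) (ξ : (Fin d → ℤ) → (Fin d → ℤ) → ℝ≥0∞)
    (Λ : Finset (Fin d → ℤ)) : ℝ :=
  ∑ π : Equiv.Perm {x : Fin d → ℤ // x ∈ Λ}, xiWeight α ξ Λ π

/-- Gibbs probability `P_Λ(ℓ₀ = k)` with general weights `ξ`. -/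
noncomputable def xiCycleProb {d : ℕ} (α : ℝ) (ξ : (Fin d → ℤ) → (Fin d → ℤ) → ℝ≥0∞)
    (Λ : Finset (Fin d → ℤ)) (k : ℕ) : ℝ :=
  (∑ π : Equiv.Perm {x : Fin d → ℤ // x ∈ Λ},
    if cycleLen Λ π = k then xiWeight α ξ Λ π else 0) / xiZ α ξ Λ

namespace Stmt17

noncomputable def Wgt {d : ℕ} (α : ℝ) (ξ : (Fin d → ℤ) → (Fin d → ℤ) → ℝ≥0∞)
    (x y : Fin d → ℤ) : ℝ≥0∞ := ENNReal.ofReal (expNeg α (ξ x y))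

noncomputable def chainW {d : ℕ} (α : ℝ) (ξ : (Fin d → ℤ) → (Fin d → ℤ) → ℝ≥0∞) :
    (Fin d → ℤ) → List (Fin d → ℤ) → ℝ≥0∞
  | _, [] => 1
  | a, y :: l => (if y = a then 0 else Wgt α ξ a y) * chainW α ξ y l

lemma expNeg_nonneg (α : ℝ) (t : ℝ≥0∞) : 0 ≤ expNeg α t := by
  unfold expNeg; split
  · exact le_rfl
  · exact (Real.exp_pos _).le

lemma expNeg_le_one {α : ℝ} (hα : 0 ≤ α) (t : ℝ≥0∞) : expNeg α t ≤ 1 := by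
  unfold expNeg; split
  · exact zero_le_one
  · rw [Real.exp_le_one_iff, neg_mul, neg_nonpos]
    exact mul_nonneg hα ENNReal.toReal_nonneg

lemma expNeg_zero (α : ℝ) : expNeg α 0 = 1 := by
  simp [expNeg]

variable {d : ℕ} {α : ℝ} {ξ : (Fin d → ℤ) → (Fin d → ℤ) → ℝ≥0∞} {c : ℝ≥0∞}

lemma Wgt_le_one (hα : 0 ≤ α) (x y : Fin d → ℤ) : Wgt α ξ x y ≤ 1 := by
  simpa [Wgt] using ENNReal.ofReal_le_one.2 (expNeg_le_one hα _)

lemma Wgt_diag (hdiag : ∀ x, ξ x x = 0) (x : Fin d → ℤ) : Wgt α ξ x x = 1 := by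
  simp [Wgt, hdiag x, expNeg_zero]

lemma row_sum_le (htrans : ∀ x y z, ξ (x + z) (y + z) = ξ x y)
    (hc : c = ∑' x : {x : Fin d → ℤ // x ≠ 0}, ENNReal.ofReal (expNeg α (ξ 0 x.1)))
    (a : Fin d → ℤ) (Λ : Finset (Fin d → ℤ)) :
    ∑ y ∈ Λ, (if y = a then 0 else Wgt α ξ a y) ≤ c := by
  classical
  set f0 : (Fin d → ℤ) → ℝ≥0∞ := fun x => if x = 0 then 0 else Wgt α ξ 0 x with hf0
  have hterm : ∀ y, (if y = a then 0 else Wgt α ξ a y) = f0 (y - a) := by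
    intro y
    by_cases h : y = a
    · simp [h, hf0]
    · have h' : y - a ≠ 0 := sub_ne_zero_of_ne h
      have htr : ξ a y = ξ 0 (y - a) := by
        have := htrans 0 (y - a) a
        simpa [zero_add, sub_add_cancel] using this
      simp [h, hf0, h', Wgt, htr]
  calc ∑ y ∈ Λ, (if y = a then 0 else Wgt α ξ a y)
      = ∑ y ∈ Λ, f0 (y - a) := Finset.sum_congr rfl (fun y _ => hterm y)
    _ = ∑ x ∈ Λ.image (· - a), f0 x := by
        rw [Finset.sum_image]
        intro x _ y _ h
        simpa using congrArg (· + a) h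
    _ ≤ ∑' x : (Fin d → ℤ), f0 x := ENNReal.sum_le_tsum _
    _ = c := by
        rw [hc]
        have hsupp : Function.support f0 ⊆ {x : Fin d → ℤ | x ≠ 0} := by
          intro x hx
          simp only [Set.mem_setOf_eq]
          intro h0
          apply hx
          simp [hf0, h0]
        rw [← tsum_subtype_eq_of_support_subset hsupp]
        apply tsum_congr
        intro x
        have : x.1 ≠ 0 := x.2
        simp [hf0, this, Wgt]

lemma chain_sum_le (htrans : ∀ x y z, ξ (x + z) (y + z) = ξ x y)
    (hc : c = ∑' x : {x : Fin d → ℤ // x ≠ 0}, ENNReal.ofReal (expNeg α (ξ 0 x.1)))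
    (Λ : Finset (Fin d → ℤ)) :
    ∀ (n : ℕ) (a : Fin d → ℤ),
      ∑ v : Fin n → {x : Fin d → ℤ // x ∈ Λ},
        chainW α ξ a (List.ofFn fun i => (v i).1) ≤ c ^ n := by
  intro n
  induction n with
  | zero => intro a; simp [chainW, List.ofFn_zero]
  | succ n ih =>
    intro a
    rw [← Equiv.sum_comp (Fin.consEquiv (fun _ : Fin (n+1) => {x : Fin d → ℤ // x ∈ Λ}))
      (fun v => chainW α ξ a (List.ofFn fun i => (v i).1)),
      Fintype.sum_prod_type]
    have hstep : ∀ (y : {x : Fin d → ℤ // x ∈ Λ}) (w : Fin n → {x : Fin d → ℤ // x ∈ Λ}),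
        chainW α ξ a (List.ofFn fun i => (((Fin.consEquiv (fun _ : Fin (n+1) => {x : Fin d → ℤ // x ∈ Λ})) (y, w)) i).1)
          = (if y.1 = a then 0 else Wgt α ξ a y.1) *
            chainW α ξ y.1 (List.ofFn fun i => (w i).1) := by
      intro y w
      have : (List.ofFn fun i => (((Fin.consEquiv (fun _ : Fin (n+1) => {x : Fin d → ℤ // x ∈ Λ})) (y, w)) i).1)
          = y.1 :: List.ofFn fun i => (w i).1 := by
        rw [List.ofFn_succ]
        simp [Fin.consEquiv]
      rw [this, chainW]
    calc ∑ y : {x : Fin d → ℤ // x ∈ Λ}, ∑ w : Fin n → {x : Fin d → ℤ // x ∈ Λ},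
          chainW α ξ a (List.ofFn fun i => (((Fin.consEquiv (fun _ : Fin (n+1) => {x : Fin d → ℤ // x ∈ Λ})) (y, w)) i).1)
        = ∑ y : {x : Fin d → ℤ // x ∈ Λ}, (if y.1 = a then 0 else Wgt α ξ a y.1) *
            ∑ w : Fin n → {x : Fin d → ℤ // x ∈ Λ},
              chainW α ξ y.1 (List.ofFn fun i => (w i).1) := by
          apply Finset.sum_congr rfl; intro y _
          rw [Finset.mul_sum]
          exact Finset.sum_congr rfl (fun w _ => hstep y w)
      _ ≤ ∑ y : {x : Fin d → ℤ // x ∈ Λ}, (if y.1 = a then 0 else Wgt α ξ a y.1) * c ^ n := by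
          apply Finset.sum_le_sum; intro y _
          exact mul_le_mul_right (ih y.1) _
      _ = (∑ y ∈ Λ, (if y = a then 0 else Wgt α ξ a y)) * c ^ n := by
          rw [Finset.sum_mul]
          rw [← Finset.sum_coe_sort Λ (fun y => (if y = a then 0 else Wgt α ξ a y) * c ^ n)]
      _ ≤ c * c ^ n := mul_le_mul_left (row_sum_le htrans hc a Λ) _
      _ = c ^ (n + 1) := (pow_succ' c n).symm

lemma chainW_ofFn (n : ℕ) (u : ℕ → (Fin d → ℤ)) (hdist : ∀ i < n, u (i+1) ≠ u i) :
    chainW α ξ (u 0) (List.ofFn fun i : Fin n => u ((i : ℕ) + 1))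
      = ∏ j ∈ Finset.range n, Wgt α ξ (u j) (u (j+1)) := by
  induction n generalizing u with
  | zero => simp [chainW, List.ofFn_zero]
  | succ n ih =>
    rw [List.ofFn_succ]
    simp only [Fin.val_succ, Fin.val_zero]
    rw [chainW, if_neg (hdist 0 (Nat.succ_pos n)), Finset.prod_range_succ']
    have h2 := ih (fun j => u (j+1)) (fun i hi => hdist (i+1) (by omega))
    simp only [Nat.zero_add] at h2 ⊢
    rw [h2, mul_comm]

section Perm

variable (Λ : Finset (Fin d → ℤ))

lemma iter_val (hΛ : (0 : Fin d → ℤ) ∈ Λ) (π : Equiv.Perm {x : Fin d → ℤ // x ∈ Λ}) (j : ℕ) :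
    (⇑(Equiv.Perm.ofSubtype π))^[j] (0 : Fin d → ℤ) = ((π ^ j) ⟨0, hΛ⟩).1 := by
  induction j with
  | zero => simp
  | succ j ih =>
    rw [Function.iterate_succ_apply', ih, pow_succ', Equiv.Perm.mul_apply]
    rw [Equiv.Perm.ofSubtype_apply_of_mem π ((π ^ j) ⟨0, hΛ⟩).2]

lemma periodic_iff (hΛ : (0 : Fin d → ℤ) ∈ Λ) (π : Equiv.Perm {x : Fin d → ℤ // x ∈ Λ}) (n : ℕ) :
    Function.IsPeriodicPt (⇑(Equiv.Perm.ofSubtype π)) n (0 : Fin d → ℤ)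
      ↔ Function.IsPeriodicPt (⇑π) n (⟨0, hΛ⟩ : {x : Fin d → ℤ // x ∈ Λ}) := by
  unfold Function.IsPeriodicPt Function.IsFixedPt
  rw [iter_val Λ hΛ π n, Equiv.Perm.iterate_eq_pow]
  exact ⟨fun h => Subtype.ext h, fun h => congrArg Subtype.val h⟩

lemma perm_periodic (hΛ : (0 : Fin d → ℤ) ∈ Λ) (π : Equiv.Perm {x : Fin d → ℤ // x ∈ Λ}) :
    (⟨0, hΛ⟩ : {x : Fin d → ℤ // x ∈ Λ}) ∈ Function.periodicPts ⇑π := by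
  refine ⟨orderOf π, orderOf_pos π, ?_⟩
  unfold Function.IsPeriodicPt Function.IsFixedPt
  rw [Equiv.Perm.iterate_eq_pow, pow_orderOf_eq_one]
  rfl

lemma cycleLen_eq (hΛ : (0 : Fin d → ℤ) ∈ Λ) (π : Equiv.Perm {x : Fin d → ℤ // x ∈ Λ}) :
    cycleLen Λ π = Function.minimalPeriod (⇑π) (⟨0, hΛ⟩ : {x : Fin d → ℤ // x ∈ Λ}) := by
  have h2 : 0 < Function.minimalPeriod (⇑π) (⟨0, hΛ⟩ : {x : Fin d → ℤ // x ∈ Λ}) :=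
    Function.minimalPeriod_pos_of_mem_periodicPts (perm_periodic Λ hΛ π)
  have h1 : 0 < cycleLen Λ π := by
    apply Function.minimalPeriod_pos_of_mem_periodicPts
    refine ⟨orderOf π, orderOf_pos π, (periodic_iff Λ hΛ π (orderOf π)).2 ?_⟩
    unfold Function.IsPeriodicPt Function.IsFixedPt
    rw [Equiv.Perm.iterate_eq_pow, pow_orderOf_eq_one]; rfl
  apply le_antisymm
  · exact Function.IsPeriodicPt.minimalPeriod_le h2
      ((periodic_iff Λ hΛ π _).2 (Function.isPeriodicPt_minimalPeriod _ _))
  · exact Function.IsPeriodicPt.minimalPeriod_le h1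
      ((periodic_iff Λ hΛ π _).1 (Function.isPeriodicPt_minimalPeriod _ _))

lemma cycleLen_pos (hΛ : (0 : Fin d → ℤ) ∈ Λ) (π : Equiv.Perm {x : Fin d → ℤ // x ∈ Λ}) :
    0 < cycleLen Λ π := by
  rw [cycleLen_eq Λ hΛ π]
  exact Function.minimalPeriod_pos_of_mem_periodicPts (perm_periodic Λ hΛ π)

lemma cycleLen_le_card (hΛ : (0 : Fin d → ℤ) ∈ Λ) (π : Equiv.Perm {x : Fin d → ℤ // x ∈ Λ}) :
    cycleLen Λ π ≤ Λ.card := by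
  classical
  rw [cycleLen_eq Λ hΛ π]
  set k := Function.minimalPeriod (⇑π) (⟨0, hΛ⟩ : {x : Fin d → ℤ // x ∈ Λ}) with hk
  have hinj : Set.InjOn (fun n => (⇑π)^[n] (⟨0, hΛ⟩ : {x : Fin d → ℤ // x ∈ Λ}))
      (Set.Iio k) := Function.iterate_injOn_Iio_minimalPeriod
  have := Finset.card_le_card_of_injOn
    (f := fun n => (⇑π)^[n] (⟨0, hΛ⟩ : {x : Fin d → ℤ // x ∈ Λ}))
    (s := Finset.range k) (t := Finset.univ)
    (fun a _ => Finset.mem_univ _)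
    (fun a ha b hb hab => hinj (by simpa using ha) (by simpa using hb) hab)
  simpa [Fintype.card_coe] using this

lemma pow_apply_zero_injOn (hΛ : (0 : Fin d → ℤ) ∈ Λ) (π : Equiv.Perm {x : Fin d → ℤ // x ∈ Λ})
    {k : ℕ} (hk : cycleLen Λ π = k) :
    Set.InjOn (fun j => (π ^ j) (⟨0, hΛ⟩ : {x : Fin d → ℤ // x ∈ Λ})) (Set.Iio k) := by
  have h := Function.iterate_injOn_Iio_minimalPeriod
    (f := ⇑π) (x := (⟨0, hΛ⟩ : {x : Fin d → ℤ // x ∈ Λ}))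
  rw [← cycleLen_eq Λ hΛ π, hk] at h
  intro a ha b hb hab
  exact h ha hb (by simpa [Equiv.Perm.iterate_eq_pow] using hab)

lemma pow_k_fixed (hΛ : (0 : Fin d → ℤ) ∈ Λ) (π : Equiv.Perm {x : Fin d → ℤ // x ∈ Λ})
    {k : ℕ} (hk : cycleLen Λ π = k) :
    (π ^ k) (⟨0, hΛ⟩ : {x : Fin d → ℤ // x ∈ Λ}) = ⟨0, hΛ⟩ := by
  have h := Function.isPeriodicPt_minimalPeriod (⇑π) (⟨0, hΛ⟩ : {x : Fin d → ℤ // x ∈ Λ})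
  rw [← cycleLen_eq Λ hΛ π, hk] at h
  simpa [Function.IsPeriodicPt, Function.IsFixedPt, Equiv.Perm.iterate_eq_pow] using h

lemma sameCycle_iff (hΛ : (0 : Fin d → ℤ) ∈ Λ) (π : Equiv.Perm {x : Fin d → ℤ // x ∈ Λ})
    {k : ℕ} (hk : cycleLen Λ π = k) (x : {x : Fin d → ℤ // x ∈ Λ}) :
    π.SameCycle ⟨0, hΛ⟩ x ↔ ∃ j, j < k ∧ (π ^ j) (⟨0, hΛ⟩ : {x : Fin d → ℤ // x ∈ Λ}) = x := by
  have hkpos : 0 < k := hk ▸ cycleLen_pos Λ hΛ π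
  constructor
  · intro h
    obtain ⟨i, _, hi⟩ := h.exists_pow_eq'
    refine ⟨i % k, Nat.mod_lt _ hkpos, ?_⟩
    have hmod := Function.iterate_mod_minimalPeriod_eq
      (f := ⇑π) (x := (⟨0, hΛ⟩ : {x : Fin d → ℤ // x ∈ Λ})) (n := i)
    rw [← cycleLen_eq Λ hΛ π, hk] at hmod
    rw [Equiv.Perm.iterate_eq_pow, Equiv.Perm.iterate_eq_pow] at hmod
    rw [hmod]; exact hi
  · rintro ⟨j, _, rfl⟩
    exact ⟨(j : ℤ), by simp [zpow_natCast]⟩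

lemma sigma_apply (hΛ : (0 : Fin d → ℤ) ∈ Λ) (π : Equiv.Perm {x : Fin d → ℤ // x ∈ Λ})
    [DecidableRel π.SameCycle] (x : {x : Fin d → ℤ // x ∈ Λ}) :
    (π * (π.cycleOf ⟨0, hΛ⟩)⁻¹) x
      = if π.SameCycle ⟨0, hΛ⟩ x then x else π x := by
  classical
  rw [Equiv.Perm.mul_apply]
  by_cases h : π.SameCycle ⟨0, hΛ⟩ x
  · rw [if_pos h]
    have h1 : (π.cycleOf ⟨0, hΛ⟩)⁻¹ x = π⁻¹ x := by
      rw [Equiv.Perm.cycleOf_inv, Equiv.Perm.cycleOf_apply,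
        if_pos ((Equiv.Perm.sameCycle_inv).2 h)]
    rw [h1]; exact π.apply_symm_apply x
  · rw [if_neg h]
    have h1 : (π.cycleOf ⟨0, hΛ⟩)⁻¹ x = x := by
      rw [Equiv.Perm.cycleOf_inv, Equiv.Perm.cycleOf_apply,
        if_neg (fun hh => h ((Equiv.Perm.sameCycle_inv).1 hh))]
    rw [h1]

lemma weight_le_chain_mul (hα : 0 ≤ α) (hdiag : ∀ x, ξ x x = 0)
    (hΛ : (0 : Fin d → ℤ) ∈ Λ) (π : Equiv.Perm {x : Fin d → ℤ // x ∈ Λ})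
    [DecidableRel π.SameCycle] {k : ℕ} (hk : cycleLen Λ π = k) :
    (∏ x : {x : Fin d → ℤ // x ∈ Λ}, Wgt α ξ x.1 (π x).1)
      ≤ chainW α ξ 0 (List.ofFn fun i : Fin (k-1) =>
          ((π ^ ((i : ℕ)+1)) (⟨0, hΛ⟩ : {x : Fin d → ℤ // x ∈ Λ})).1)
        * ∏ x : {x : Fin d → ℤ // x ∈ Λ}, Wgt α ξ x.1 ((π * (π.cycleOf ⟨0, hΛ⟩)⁻¹) x).1 := by
  classical
  have hkpos : 0 < k := hk ▸ cycleLen_pos Λ hΛ π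
  set c0 : {x : Fin d → ℤ // x ∈ Λ} := ⟨0, hΛ⟩ with hc0
  set u : ℕ → {x : Fin d → ℤ // x ∈ Λ} := fun j => (π ^ j) c0 with hu
  have hustep : ∀ j, π (u j) = u (j+1) := by
    intro j
    rw [hu]
    simp only []
    rw [pow_succ', Equiv.Perm.mul_apply]
  have hinj := pow_apply_zero_injOn Λ hΛ π hk
  set S : Finset {x : Fin d → ℤ // x ∈ Λ} :=
    Finset.univ.filter (fun x => π.SameCycle c0 x) with hSdef
  have hS_img : S = (Finset.range k).image u := by
    ext x
    simp only [hSdef, Finset.mem_filter, Finset.mem_univ, true_and, Finset.mem_image,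
      Finset.mem_range]
    rw [sameCycle_iff Λ hΛ π hk x]
  -- the product over the cycle
  have hcycleprod : (∏ x ∈ S, Wgt α ξ x.1 (π x).1)
      = ∏ j ∈ Finset.range k, Wgt α ξ (u j).1 (u (j+1)).1 := by
    rw [hS_img, Finset.prod_image]
    · exact Finset.prod_congr rfl (fun j _ => by rw [hustep j])
    · intro a ha b hb hab
      exact hinj (by simpa using ha) (by simpa using hb) hab
  -- dropping the last factor
  have hdrop : (∏ j ∈ Finset.range k, Wgt α ξ (u j).1 (u (j+1)).1)
      ≤ ∏ j ∈ Finset.range (k-1), Wgt α ξ (u j).1 (u (j+1)).1 := by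
    conv_lhs => rw [show k = (k-1)+1 by omega]
    rw [Finset.prod_range_succ]
    calc (∏ j ∈ Finset.range (k-1), Wgt α ξ (u j).1 (u (j+1)).1) * Wgt α ξ (u (k-1)).1 (u (k-1+1)).1
        ≤ (∏ j ∈ Finset.range (k-1), Wgt α ξ (u j).1 (u (j+1)).1) * 1 :=
          mul_le_mul_right (Wgt_le_one hα _ _) _
      _ = _ := mul_one _
  -- chain identity
  have hchain : chainW α ξ 0 (List.ofFn fun i : Fin (k-1) => (u ((i : ℕ)+1)).1)
      = ∏ j ∈ Finset.range (k-1), Wgt α ξ (u j).1 (u (j+1)).1 := by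
    have hdist : ∀ i < k - 1, ((fun j => (u j).1) (i+1)) ≠ ((fun j => (u j).1) i) := by
      intro i hi
      simp only []
      intro hval
      have : u (i+1) = u i := Subtype.ext hval
      have := hinj (by simp; omega) (by simp; omega) this
      omega
    have h := chainW_ofFn (α := α) (ξ := ξ) (k-1) (fun j => (u j).1) hdist
    have hu0 : ((fun j => (u j).1) 0) = (0 : Fin d → ℤ) := by
      simp [hu, hc0]
    rw [show (u 0).1 = 0 from hu0] at h
    exact h
  -- sigma weight
  set σ : Equiv.Perm {x : Fin d → ℤ // x ∈ Λ} := π * (π.cycleOf c0)⁻¹ with hσdef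
  have hσw : (∏ x : {x : Fin d → ℤ // x ∈ Λ}, Wgt α ξ x.1 (σ x).1)
      = ∏ x ∈ Finset.univ.filter (fun x => ¬ π.SameCycle c0 x), Wgt α ξ x.1 (π x).1 := by
    rw [← Finset.prod_filter_mul_prod_filter_not Finset.univ (fun x => π.SameCycle c0 x)
      (fun x => Wgt α ξ x.1 (σ x).1)]
    have h1 : (∏ x ∈ Finset.univ.filter (fun x => π.SameCycle c0 x),
        Wgt α ξ x.1 (σ x).1) = 1 := by
      apply Finset.prod_eq_one
      intro x hx
      have hx' : π.SameCycle c0 x := (Finset.mem_filter.1 hx).2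
      rw [hσdef, sigma_apply Λ hΛ π x, if_pos hx']
      exact Wgt_diag hdiag _
    rw [h1, one_mul]
    apply Finset.prod_congr rfl
    intro x hx
    have hx' : ¬ π.SameCycle c0 x := (Finset.mem_filter.1 hx).2
    rw [hσdef, sigma_apply Λ hΛ π x, if_neg hx']
  -- assemble
  have hsplit : (∏ x : {x : Fin d → ℤ // x ∈ Λ}, Wgt α ξ x.1 (π x).1)
      = (∏ x ∈ S, Wgt α ξ x.1 (π x).1)
        * ∏ x ∈ Finset.univ.filter (fun x => ¬ π.SameCycle c0 x), Wgt α ξ x.1 (π x).1 := by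
    rw [hSdef]
    exact (Finset.prod_filter_mul_prod_filter_not Finset.univ _ _).symm
  rw [hsplit, hσw, hchain, hcycleprod]
  exact mul_le_mul_left hdrop _

lemma F_inj (hΛ : (0 : Fin d → ℤ) ∈ Λ) (π π' : Equiv.Perm {x : Fin d → ℤ // x ∈ Λ})
    [DecidableRel π.SameCycle] [DecidableRel π'.SameCycle]
    {k : ℕ} (hk : cycleLen Λ π = k) (hk' : cycleLen Λ π' = k) (hk1 : 1 ≤ k)
    (hvec : ∀ i : Fin (k-1), (π ^ ((i : ℕ)+1)) (⟨0, hΛ⟩ : {x : Fin d → ℤ // x ∈ Λ})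
      = (π' ^ ((i : ℕ)+1)) (⟨0, hΛ⟩ : {x : Fin d → ℤ // x ∈ Λ}))
    (hσ : π * (π.cycleOf ⟨0, hΛ⟩)⁻¹ = π' * (π'.cycleOf ⟨0, hΛ⟩)⁻¹) :
    π = π' := by
  classical
  set c0 : {x : Fin d → ℤ // x ∈ Λ} := ⟨0, hΛ⟩ with hc0
  have hu : ∀ j, j ≤ k → (π ^ j) c0 = (π' ^ j) c0 := by
    intro j hj
    match j, hj with
    | 0, _ => simp
    | (i+1), hj =>
      by_cases hik : i < k - 1
      · exact hvec ⟨i, hik⟩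
      · have : i + 1 = k := by omega
        rw [this, pow_k_fixed Λ hΛ π hk, pow_k_fixed Λ hΛ π' hk']
  have hsc : ∀ x, π.SameCycle c0 x ↔ π'.SameCycle c0 x := by
    intro x
    rw [sameCycle_iff Λ hΛ π hk x, sameCycle_iff Λ hΛ π' hk' x]
    constructor
    · rintro ⟨j, hj, hjx⟩; exact ⟨j, hj, by rw [← hu j hj.le]; exact hjx⟩
    · rintro ⟨j, hj, hjx⟩; exact ⟨j, hj, by rw [hu j hj.le]; exact hjx⟩
  apply Equiv.ext
  intro x
  by_cases hx : π.SameCycle c0 x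
  · obtain ⟨j, hj, rfl⟩ := (sameCycle_iff Λ hΛ π hk x).1 hx
    have h1 : π ((π ^ j) c0) = (π ^ (j+1)) c0 := by
      rw [pow_succ', Equiv.Perm.mul_apply]
    have h2 : π' ((π ^ j) c0) = (π' ^ (j+1)) c0 := by
      rw [hu j hj.le, pow_succ', Equiv.Perm.mul_apply]
    rw [h1, h2]
    exact hu (j+1) hj
  · have hx' : ¬ π'.SameCycle c0 x := fun h => hx ((hsc x).2 h)
    have e1 : (π * (π.cycleOf c0)⁻¹) x = π x := by
      rw [sigma_apply Λ hΛ π x, if_neg hx]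
    have e2 : (π' * (π'.cycleOf c0)⁻¹) x = π' x := by
      rw [sigma_apply Λ hΛ π' x, if_neg hx']
    rw [← e1, ← e2, hσ]

lemma ofReal_xiWeight (π : Equiv.Perm {x : Fin d → ℤ // x ∈ Λ}) :
    ENNReal.ofReal (xiWeight α ξ Λ π)
      = ∏ x : {x : Fin d → ℤ // x ∈ Λ}, Wgt α ξ x.1 (π x).1 := by
  unfold xiWeight Wgt
  exact ENNReal.ofReal_prod_of_nonneg (fun i _ => expNeg_nonneg α _)

lemma xiWeight_nonneg (π : Equiv.Perm {x : Fin d → ℤ // x ∈ Λ}) :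
    0 ≤ xiWeight α ξ Λ π :=
  Finset.prod_nonneg (fun i _ => expNeg_nonneg α _)

lemma one_le_xiZ (hdiag : ∀ x, ξ x x = 0) : 1 ≤ xiZ α ξ Λ := by
  have h1 : xiWeight α ξ Λ 1 = 1 := by
    unfold xiWeight
    apply Finset.prod_eq_one
    intro x _
    simp [hdiag, expNeg_zero]
  calc (1 : ℝ) = xiWeight α ξ Λ 1 := h1.symm
    _ ≤ xiZ α ξ Λ := Finset.single_le_sum
        (fun π _ => xiWeight_nonneg Λ π) (Finset.mem_univ 1)

lemma numer_le (hα : 0 ≤ α) (hdiag : ∀ x, ξ x x = 0)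
    (htrans : ∀ x y z, ξ (x + z) (y + z) = ξ x y)
    (hc : c = ∑' x : {x : Fin d → ℤ // x ≠ 0}, ENNReal.ofReal (expNeg α (ξ 0 x.1)))
    (hΛ : (0 : Fin d → ℤ) ∈ Λ) (k : ℕ) (hk1 : 1 ≤ k) :
    (∑ π : Equiv.Perm {x : Fin d → ℤ // x ∈ Λ},
        if cycleLen Λ π = k then ENNReal.ofReal (xiWeight α ξ Λ π) else 0)
      ≤ c ^ (k-1) * ∑ π : Equiv.Perm {x : Fin d → ℤ // x ∈ Λ},
          ENNReal.ofReal (xiWeight α ξ Λ π) := by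
  classical
  set c0 : {x : Fin d → ℤ // x ∈ Λ} := ⟨0, hΛ⟩ with hc0
  set A : Finset (Equiv.Perm {x : Fin d → ℤ // x ∈ Λ}) :=
    Finset.univ.filter (fun π => cycleLen Λ π = k) with hA
  set F : Equiv.Perm {x : Fin d → ℤ // x ∈ Λ} →
      (Fin (k-1) → {x : Fin d → ℤ // x ∈ Λ}) × Equiv.Perm {x : Fin d → ℤ // x ∈ Λ} :=
    fun π => (fun i => (π ^ ((i : ℕ)+1)) c0, π * (π.cycleOf c0)⁻¹) with hF
  set G : (Fin (k-1) → {x : Fin d → ℤ // x ∈ Λ}) × Equiv.Perm {x : Fin d → ℤ // x ∈ Λ} → ℝ≥0∞ :=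
    fun q => chainW α ξ 0 (List.ofFn fun i => (q.1 i).1)
      * ∏ x : {x : Fin d → ℤ // x ∈ Λ}, Wgt α ξ x.1 (q.2 x).1 with hG
  have step1 : (∑ π : Equiv.Perm {x : Fin d → ℤ // x ∈ Λ},
      if cycleLen Λ π = k then ENNReal.ofReal (xiWeight α ξ Λ π) else 0)
      = ∑ π ∈ A, ENNReal.ofReal (xiWeight α ξ Λ π) := by
    rw [hA, Finset.sum_filter]
  rw [step1]
  calc ∑ π ∈ A, ENNReal.ofReal (xiWeight α ξ Λ π)
      ≤ ∑ π ∈ A, G (F π) := by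
        apply Finset.sum_le_sum
        intro π hπ
        have hπk : cycleLen Λ π = k := (Finset.mem_filter.1 hπ).2
        rw [ofReal_xiWeight]
        exact weight_le_chain_mul Λ hα hdiag hΛ π hπk
    _ = ∑ q ∈ A.image F, G q := by
        rw [Finset.sum_image]
        intro π hπ π' hπ' hFF
        have hπk : cycleLen Λ π = k := (Finset.mem_filter.1 hπ).2
        have hπk' : cycleLen Λ π' = k := (Finset.mem_filter.1 hπ').2
        have h1 : ∀ i : Fin (k-1), (π ^ ((i : ℕ)+1)) c0 = (π' ^ ((i : ℕ)+1)) c0 :=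
          fun i => congrFun (congrArg Prod.fst hFF) i
        have h2 : π * (π.cycleOf c0)⁻¹ = π' * (π'.cycleOf c0)⁻¹ :=
          congrArg Prod.snd hFF
        exact F_inj Λ hΛ π π' hπk hπk' hk1 h1 h2
    _ ≤ ∑ q : (Fin (k-1) → {x : Fin d → ℤ // x ∈ Λ}) × Equiv.Perm {x : Fin d → ℤ // x ∈ Λ}, G q :=
        Finset.sum_le_sum_of_subset (Finset.subset_univ _)
    _ = (∑ v : Fin (k-1) → {x : Fin d → ℤ // x ∈ Λ},
          chainW α ξ 0 (List.ofFn fun i => (v i).1))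
        * ∑ σ : Equiv.Perm {x : Fin d → ℤ // x ∈ Λ},
            ∏ x : {x : Fin d → ℤ // x ∈ Λ}, Wgt α ξ x.1 (σ x).1 := by
        rw [Finset.sum_mul_sum]
        rw [Fintype.sum_prod_type]
    _ ≤ c ^ (k-1) * ∑ π : Equiv.Perm {x : Fin d → ℤ // x ∈ Λ},
          ENNReal.ofReal (xiWeight α ξ Λ π) := by
        apply mul_le_mul' (chain_sum_le htrans hc Λ (k-1) 0)
        apply le_of_eq
        exact Finset.sum_congr rfl (fun π _ => (ofReal_xiWeight Λ π).symm)

end Perm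

lemma cycleProb_le (hα : 0 ≤ α) (hdiag : ∀ x, ξ x x = 0)
    (htrans : ∀ x y z, ξ (x + z) (y + z) = ξ x y)
    (hc : c = ∑' x : {x : Fin d → ℤ // x ≠ 0}, ENNReal.ofReal (expNeg α (ξ 0 x.1)))
    (Λ : Finset (Fin d → ℤ)) (hΛ : (0 : Fin d → ℤ) ∈ Λ) (k : ℕ) (hk1 : 1 ≤ k) :
    ENNReal.ofReal (xiCycleProb α ξ Λ k) ≤ c ^ (k-1) := by
  have hZ1 : 1 ≤ xiZ α ξ Λ := one_le_xiZ Λ hdiag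
  have hZpos : 0 < xiZ α ξ Λ := lt_of_lt_of_le one_pos hZ1
  unfold xiCycleProb
  rw [ENNReal.ofReal_div_of_pos hZpos]
  have hnum : ENNReal.ofReal (∑ π : Equiv.Perm {x : Fin d → ℤ // x ∈ Λ},
      if cycleLen Λ π = k then xiWeight α ξ Λ π else 0)
      = ∑ π : Equiv.Perm {x : Fin d → ℤ // x ∈ Λ},
          if cycleLen Λ π = k then ENNReal.ofReal (xiWeight α ξ Λ π) else 0 := by
    rw [ENNReal.ofReal_sum_of_nonneg]
    · apply Finset.sum_congr rfl
      intro π _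
      split_ifs <;> simp
    · intro π _
      split_ifs
      · exact xiWeight_nonneg Λ π
      · exact le_rfl
  rw [hnum]
  have hZofReal : ENNReal.ofReal (xiZ α ξ Λ)
      = ∑ π : Equiv.Perm {x : Fin d → ℤ // x ∈ Λ}, ENNReal.ofReal (xiWeight α ξ Λ π) := by
    unfold xiZ
    exact ENNReal.ofReal_sum_of_nonneg (fun π _ => xiWeight_nonneg Λ π)
  rw [ENNReal.div_le_iff_le_mul (Or.inl ?hz) (Or.inl ?hz2)]
  case hz => simp [ENNReal.ofReal_eq_zero]; linarith
  case hz2 => exact ENNReal.ofReal_ne_top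
  rw [hZofReal]
  exact numer_le Λ hα hdiag htrans hc hΛ k hk1

lemma sum_cycleProb_eq_one (hdiag : ∀ x, ξ x x = 0)
    (Λ : Finset (Fin d → ℤ)) (hΛ : (0 : Fin d → ℤ) ∈ Λ) (N : ℕ) (hN : Λ.card ≤ N) :
    ∑ k ∈ Finset.Ioc 0 N, xiCycleProb α ξ Λ k = 1 := by
  have hZ1 : 1 ≤ xiZ α ξ Λ := one_le_xiZ Λ hdiag
  have hZne : xiZ α ξ Λ ≠ 0 := by linarith
  unfold xiCycleProb
  rw [← Finset.sum_div]
  rw [Finset.sum_comm]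
  have hin : ∀ π : Equiv.Perm {x : Fin d → ℤ // x ∈ Λ},
      (∑ k ∈ Finset.Ioc 0 N, if cycleLen Λ π = k then xiWeight α ξ Λ π else 0)
        = xiWeight α ξ Λ π := by
    intro π
    rw [Finset.sum_ite_eq]
    rw [if_pos]
    rw [Finset.mem_Ioc]
    exact ⟨cycleLen_pos Λ hΛ π, le_trans (cycleLen_le_card Λ hΛ π) hN⟩
  rw [Finset.sum_congr rfl (fun π _ => hin π)]
  exact div_self hZne

lemma tail_geom (r : ℝ) (hr0 : 0 ≤ r) (hr1 : r < 1) (K N : ℕ) :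
    ∑ k ∈ Finset.Ioc K N, r ^ (k-1) ≤ r ^ K * (1 - r)⁻¹ := by
  have himg : (Finset.range (N-K)).image (fun j => K+1+j) = Finset.Ioc K N := by
    ext x
    simp only [Finset.mem_image, Finset.mem_range, Finset.mem_Ioc]
    constructor
    · rintro ⟨j, hj, rfl⟩; omega
    · intro h; exact ⟨x - K - 1, by omega, by omega⟩
  rw [← himg, Finset.sum_image (by intro a _ b _ h; simpa using h)]
  have hterm : ∀ j, r ^ (K + 1 + j - 1) = r ^ K * r ^ j := by
    intro j
    rw [show K + 1 + j - 1 = K + j by omega, pow_add]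
  rw [Finset.sum_congr rfl (fun j _ => hterm j), ← Finset.mul_sum]
  apply mul_le_mul_of_nonneg_left _ (pow_nonneg hr0 K)
  have hs : ∑ j ∈ Finset.range (N-K), r ^ j ≤ ∑' j : ℕ, r ^ j :=
    Summable.sum_le_tsum (Finset.range (N-K)) (fun i _ => pow_nonneg hr0 i)
      (summable_geometric_of_lt_one hr0 hr1)
  rwa [tsum_geometric_of_lt_one hr0 hr1] at hs

lemma sum_range_succ_eq_Ioc (p : ℕ → ℝ) (n : ℕ) :
    ∑ i ∈ Finset.range n, p (i+1) = ∑ k ∈ Finset.Ioc 0 n, p k := by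
  induction n with
  | zero => simp
  | succ n ih =>
    rw [Finset.sum_range_succ, ih, Finset.sum_Ioc_succ_top (Nat.zero_le n)]

end Stmt17

open Filter in
/-- general-weight version of the exponential bound: for a nonnegative
symmetric translation-invariant `ξ` with `ξ(x,x) = 0` and
`c = Σ_{x ≠ 0} exp(-α ξ(0,x))`, one has `P_Λ(ℓ₀ = k) ≤ c^{k-1}` for every finite `Λ ∋ 0`
and every `k ≥ 1`; and if `c < 1` then, along increasing exhausting sequences of cubes for
which the limits `p_k = lim_m P_{Λ_m}(ℓ₀ = k)` exist, `Σ_{k ≥ 1} p_k = 1` (no infinite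
cycles). -/
theorem xi_cycleProb_exponential_bound {d : ℕ} (hd : 1 ≤ d) {α : ℝ} (hα : 0 < α)
    (ξ : (Fin d → ℤ) → (Fin d → ℤ) → ℝ≥0∞)
    (hsymm : ∀ x y, ξ x y = ξ y x)
    (htrans : ∀ x y z, ξ (x + z) (y + z) = ξ x y)
    (hdiag : ∀ x, ξ x x = 0)
    (c : ℝ≥0∞)
    (hc : c = ∑' x : {x : Fin d → ℤ // x ≠ 0}, ENNReal.ofReal (expNeg α (ξ 0 x.1))) :
    (∀ Λ : Finset (Fin d → ℤ), (0 : Fin d → ℤ) ∈ Λ → ∀ k : ℕ, 1 ≤ k →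
      ENNReal.ofReal (xiCycleProb α ξ Λ k) ≤ c ^ (k - 1)) ∧
    (c < 1 → ∀ L : ℕ → ℕ, Monotone L → Tendsto L atTop atTop →
      ∀ p : ℕ → ℝ,
        (∀ k : ℕ, 1 ≤ k →
          Tendsto (fun m => xiCycleProb α ξ (centeredCube d (L m)) k) atTop (nhds (p k))) →
        HasSum (fun k : ℕ => p (k + 1)) 1) := by
  have hα0 : 0 ≤ α := hα.le
  constructor
  · intro Λ hΛ k hk1
    exact Stmt17.cycleProb_le hα0 hdiag htrans hc Λ hΛ k hk1
  · intro hclt L _ _ p hp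
    set r : ℝ := c.toReal with hr
    have hc_ne_top : c ≠ ∞ := (hclt.trans ENNReal.one_lt_top).ne
    have hr0 : 0 ≤ r := ENNReal.toReal_nonneg
    have hr1 : r < 1 := by
      have := (ENNReal.toReal_lt_toReal hc_ne_top ENNReal.one_ne_top).2 hclt
      simpa using this
    have hΛm : ∀ m, (0 : Fin d → ℤ) ∈ centeredCube d (L m) := by
      intro m
      unfold centeredCube
      rw [Fintype.mem_piFinset]
      intro i
      rw [Finset.mem_Icc]
      constructor
      · simp only [Pi.zero_apply]
        exact neg_nonpos.2 (Int.natCast_nonneg _)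
      · simp only [Pi.zero_apply]
        exact Int.natCast_nonneg _
    have hPnn : ∀ m k, 0 ≤ xiCycleProb α ξ (centeredCube d (L m)) k := by
      intro m k
      apply div_nonneg
      · apply Finset.sum_nonneg
        intro π _
        split_ifs
        · exact Stmt17.xiWeight_nonneg _ π
        · exact le_rfl
      · linarith [Stmt17.one_le_xiZ (α := α) (ξ := ξ) (centeredCube d (L m)) hdiag]
    have hPle : ∀ m k, 1 ≤ k → xiCycleProb α ξ (centeredCube d (L m)) k ≤ r ^ (k-1) := by
      intro m k hk1
      have h := Stmt17.cycleProb_le hα0 hdiag htrans hc _ (hΛm m) k hk1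
      calc xiCycleProb α ξ (centeredCube d (L m)) k
          = (ENNReal.ofReal (xiCycleProb α ξ (centeredCube d (L m)) k)).toReal :=
            (ENNReal.toReal_ofReal (hPnn m k)).symm
        _ ≤ (c ^ (k-1)).toReal :=
            ENNReal.toReal_mono (ENNReal.pow_ne_top hc_ne_top) h
        _ = r ^ (k-1) := ENNReal.toReal_pow c (k-1)
    have hpnn : ∀ k, 1 ≤ k → 0 ≤ p k := fun k hk =>
      ge_of_tendsto (hp k hk) (Filter.Eventually.of_forall fun m => hPnn m k)
    have hsum_le : ∀ m K, ∑ k ∈ Finset.Ioc 0 K,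
        xiCycleProb α ξ (centeredCube d (L m)) k ≤ 1 := by
      intro m K
      have h1 := Stmt17.sum_cycleProb_eq_one (α := α) hdiag _ (hΛm m)
        (max ((centeredCube d (L m)).card) K) (le_max_left _ _)
      rw [← h1]
      apply Finset.sum_le_sum_of_subset_of_nonneg
      · exact Finset.Ioc_subset_Ioc le_rfl (le_max_right _ _)
      · intro k _ _
        exact hPnn m k
    have hsum_ge : ∀ m K, 1 - r ^ K * (1-r)⁻¹
        ≤ ∑ k ∈ Finset.Ioc 0 K, xiCycleProb α ξ (centeredCube d (L m)) k := by
      intro m K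
      set N := max ((centeredCube d (L m)).card) K with hN
      have h1 := Stmt17.sum_cycleProb_eq_one (α := α) hdiag _ (hΛm m) N (le_max_left _ _)
      have hsplit := Finset.sum_Ioc_consecutive
        (fun k => xiCycleProb α ξ (centeredCube d (L m)) k)
        (Nat.zero_le K) (le_max_right ((centeredCube d (L m)).card) K)
      have htail : ∑ k ∈ Finset.Ioc K N, xiCycleProb α ξ (centeredCube d (L m)) k
          ≤ r ^ K * (1-r)⁻¹ := by
        refine le_trans (Finset.sum_le_sum fun k hk => hPle m k ?_)
          (Stmt17.tail_geom r hr0 hr1 K N)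
        have := (Finset.mem_Ioc.1 hk).1
        omega
      rw [← hN] at hsplit
      linarith
    have htendA : ∀ K : ℕ, Tendsto
        (fun m => ∑ k ∈ Finset.Ioc 0 K, xiCycleProb α ξ (centeredCube d (L m)) k)
        atTop (nhds (∑ k ∈ Finset.Ioc 0 K, p k)) := by
      intro K
      apply tendsto_finset_sum
      intro k hk
      exact hp k (Finset.mem_Ioc.1 hk).1
    have hA_le : ∀ K : ℕ, (∑ k ∈ Finset.Ioc 0 K, p k) ≤ 1 := fun K =>
      le_of_tendsto (htendA K) (Filter.Eventually.of_forall fun m => hsum_le m K)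
    have hA_ge : ∀ K : ℕ, 1 - r ^ K * (1-r)⁻¹ ≤ ∑ k ∈ Finset.Ioc 0 K, p k := fun K =>
      ge_of_tendsto (htendA K) (Filter.Eventually.of_forall fun m => hsum_ge m K)
    have hlow_tend : Tendsto (fun K : ℕ => 1 - r ^ K * (1-r)⁻¹) atTop (nhds 1) := by
      have h0 : Tendsto (fun K : ℕ => r ^ K) atTop (nhds 0) :=
        tendsto_pow_atTop_nhds_zero_of_lt_one hr0 hr1
      have h2 := h0.mul_const (1-r)⁻¹
      have h3 := tendsto_const_nhds (x := (1:ℝ)) (f := atTop (α := ℕ)) |>.sub h2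
      simpa using h3
    have hAtend : Tendsto (fun K => ∑ k ∈ Finset.Ioc 0 K, p k) atTop (nhds 1) :=
      tendsto_of_tendsto_of_tendsto_of_le_of_le hlow_tend tendsto_const_nhds hA_ge hA_le
    rw [hasSum_iff_tendsto_nat_of_nonneg (fun i => hpnn (i+1) (by omega)) 1]
    have heq : (fun n => ∑ i ∈ Finset.range n, p (i+1))
        = fun n => ∑ k ∈ Finset.Ioc 0 n, p k :=
      funext (Stmt17.sum_range_succ_eq_Ioc p)
    rw [heq]
    exact hAtend
end
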